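/- arXiv:1711.10227 — 2 statements merged into one kernel-verified Lean document; each statement's English description precedes it below -/
import Mathlib

section
/- Let G be a finite simple graph, s a vertex of G, and S = (v_1, …, v_t) a minimal valid strategy for the firefighting process on (G, s) with t ≥ 1. Then G contains an induced path starting at s with at least t + 1 vertices; moreover, such a path can be chosen ending at v_t so that every vertex on it other than v_t is burned by S. -/
open SimpleGraph

variable {V : Type*}

/-- The set of vertices burned by the end of time step `i` (0-indexed: `burnt G s S i` is `B_i`),
when a fire starts at `s` and the firefighter defends the vertices of the list `S` in order. -/
def burnt (G : SimpleGraph V) (s : V) (S : List V) : ℕ → Set V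
  | 0 => {s}
  | i + 1 => burnt G s S i ∪
      {u | u ∉ S.take (i + 1) ∧ ∃ b ∈ burnt G s S i, G.Adj u b}

/-- The set of all vertices ever burned by the strategy `S`. -/
def BurntSet (G : SimpleGraph V) (s : V) (S : List V) : Set V := ⋃ i, burnt G s S i

/-- A strategy is a sequence of pairwise distinct vertices; it is valid if the vertex defended
at each step is not yet burning at the start of that step. -/
def ValidStrategy (G : SimpleGraph V) (s : V) (S : List V) : Prop :=
  S.Nodup ∧ ∀ (i : ℕ) (h : i < S.length), S.get ⟨i, h⟩ ∉ burnt G s S i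

/-- The number of vertices saved (i.e. not burned) by the strategy `S`. -/
noncomputable def sav (G : SimpleGraph V) (s : V) (S : List V) : ℕ := (BurntSet G s S)ᶜ.ncard

/-- A valid strategy is minimal if every proper subsequence of it which is itself a valid
strategy saves strictly fewer vertices. -/
def MinimalStrategy (G : SimpleGraph V) (s : V) (S : List V) : Prop :=
  ValidStrategy G s S ∧ ∀ S' : List V, S'.Sublist S → S' ≠ S → ValidStrategy G s S' →
    sav G s S' < sav G s S

/-- A strategy is optimal if it is minimal and saves the maximum number of vertices. -/
def OptimalStrategy (G : SimpleGraph V) (s : V) (S : List V) : Prop :=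
  MinimalStrategy G s S ∧ ∀ S' : List V, ValidStrategy G s S' → sav G s S' ≤ sav G s S

/-- A walk is an induced path if it is a path and the subgraph induced on its vertices has no
edges besides the edges of the path. -/
def IsInducedPath (G : SimpleGraph V) {a b : V} (p : G.Walk a b) : Prop :=
  p.IsPath ∧ ∀ x ∈ p.support, ∀ y ∈ p.support, G.Adj x y → p.toSubgraph.Adj x y

/-- `u` is reachable from `s` in the subgraph of `G` induced on the complement of `A`. -/
def ReachAvoiding (G : SimpleGraph V) (A : Set V) (s u : V) : Prop :=
  ∃ p : G.Walk s u, ∀ x ∈ p.support, x ∉ A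

/-!
Let `v` be the last defended vertex. If no burned vertex were adjacent to `v`, dropping `v` from
the strategy would change no burned set, contradicting minimality; so a walk from `s` to `v`
runs through burned vertices only, and removing repeated vertices and chords from it yields an
induced path. Burned vertices are never defended, and a vertex joined to `s` by a walk of length
`d` avoiding all defended vertices burns by step `d`. Hence if the path had fewer than `t` edges,
its vertex before `v` would burn by step `t - 2` and `v` would burn by step `t - 1`, before it is
defended.
-/

namespace SimpleGraph.Walk

variable {G : SimpleGraph V} {u v : V}

lemma exists_shorter_of_adj_getVert (p : G.Walk u v) {i j : ℕ} (hij : i + 2 ≤ j)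
    (hj : j ≤ p.length) (h : G.Adj (p.getVert i) (p.getVert j)) :
    ∃ q : G.Walk u v, q.length < p.length ∧ q.support ⊆ p.support := by
  refine ⟨(p.take i).append (cons h (p.drop j)), ?_, ?_⟩
  · simp only [length_append, take_length, length_cons, drop_length]
    omega
  · rw [support_append, support_cons, List.tail_cons, support_take,
      drop_support_eq_support_drop_min]
    exact List.append_subset.2 ⟨List.take_subset _ _, List.drop_subset _ _⟩

lemma exists_shorter_of_not_toSubgraph_adj (p : G.Walk u v) {x y : V} (hx : x ∈ p.support)
    (hy : y ∈ p.support) (hxy : G.Adj x y) (hp : ¬ p.toSubgraph.Adj x y) :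
    ∃ q : G.Walk u v, q.length < p.length ∧ q.support ⊆ p.support := by
  obtain ⟨i, rfl, hi⟩ := mem_support_iff_exists_getVert.1 hx
  obtain ⟨j, rfl, hj⟩ := mem_support_iff_exists_getVert.1 hy
  rcases lt_trichotomy i j with hij | rfl | hij
  · rcases (Nat.succ_le_of_lt hij).eq_or_lt with rfl | hij
    · exact absurd (p.toSubgraph_adj_getVert (by omega)) hp
    · exact p.exists_shorter_of_adj_getVert hij hj hxy
  · exact absurd hxy (G.loopless.irrefl _)
  · rcases (Nat.succ_le_of_lt hij).eq_or_lt with rfl | hij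
    · exact absurd (p.toSubgraph_adj_getVert (by omega)).symm hp
    · exact p.exists_shorter_of_adj_getVert hij hi hxy.symm

lemma exists_isInducedPath_support_subset (p : G.Walk u v) :
    ∃ q : G.Walk u v, IsInducedPath G q ∧ q.support ⊆ p.support := by
  classical
  induction h : p.length using Nat.strong_induction_on generalizing p with
  | _ n ih =>
    by_cases hind : IsInducedPath G p.bypass
    · exact ⟨p.bypass, hind, p.support_bypass_subset_support⟩
    obtain ⟨x, hx, y, hy, hxy, hns⟩ : ∃ x ∈ p.bypass.support, ∃ y ∈ p.bypass.support,
        G.Adj x y ∧ ¬ p.bypass.toSubgraph.Adj x y := by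
      simpa [IsInducedPath, p.bypass_isPath] using hind
    obtain ⟨q, hqlen, hqsub⟩ := p.bypass.exists_shorter_of_not_toSubgraph_adj hx hy hxy hns
    obtain ⟨r, hr, hrsub⟩ :=
      ih q.length (h ▸ hqlen.trans_le p.length_bypass_le_length) q rfl
    exact ⟨r, hr, fun _ hz => p.support_bypass_subset_support (hqsub (hrsub hz))⟩

end SimpleGraph.Walk

section Firefighting

variable {G : SimpleGraph V} {s : V} {S : List V}

lemma burnt_monotone : Monotone (burnt G s S) :=
  monotone_nat_of_le_succ fun _ => Set.subset_union_left

lemma mem_burnt_length_of_walk {u : V} (p : G.Walk u s) (hp : ∀ x ∈ p.support, x ∉ S) :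
    u ∈ burnt G s S p.length := by
  induction p with
  | nil => rfl
  | cons h q ih =>
    refine Or.inr ⟨fun hu => hp _ (by simp) (List.mem_of_mem_take hu), _, ?_, h⟩
    exact ih fun x hx => hp x (by simp [hx])

lemma exists_walk_of_mem_burntSet {u : V} (hu : u ∈ BurntSet G s S) :
    ∃ p : G.Walk s u, ∀ x ∈ p.support, x ∈ BurntSet G s S := by
  obtain ⟨i, hi⟩ := Set.mem_iUnion.1 hu
  induction i generalizing u with
  | zero =>
    obtain rfl : u = s := hi
    exact ⟨Walk.nil, by simpa using hu⟩
  | succ i ih =>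
    rcases hi with hi | ⟨-, b, hb, hub⟩
    · exact ih hu hi
    · obtain ⟨p, hp⟩ := ih (Set.mem_iUnion.2 ⟨i, hb⟩) hb
      refine ⟨p.concat hub.symm, fun x hx => ?_⟩
      rw [Walk.support_concat, List.mem_append, List.mem_singleton] at hx
      exact hx.elim (hp x) fun hx => hx ▸ hu

namespace ValidStrategy

lemma getElem_notMem_burnt (hS : ValidStrategy G s S) {k : ℕ} (hk : k < S.length) (i : ℕ) :
    S[k] ∉ burnt G s S i := by
  intro hi
  rcases le_total i k with hik | hki
  · exact hS.2 k hk (burnt_monotone hik hi)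
  induction i, hki using Nat.le_induction with
  | base => exact hS.2 k hk hi
  | succ i hki ih =>
    rcases hi with hi | ⟨hk', -⟩
    · exact ih hi
    · exact hk' (List.mem_take_iff_getElem.2 ⟨k, by omega, rfl⟩)

lemma notMem_burntSet (hS : ValidStrategy G s S) {u : V} (hu : u ∈ S) :
    u ∉ BurntSet G s S := by
  obtain ⟨k, hk, rfl⟩ := List.mem_iff_getElem.1 hu
  simpa [BurntSet] using hS.getElem_notMem_burnt hk

lemma le_length_of_adj_getElem (hS : ValidStrategy G s S) {k : ℕ} (hk : k < S.length) {c : V}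
    (r : G.Walk c s) (hr : ∀ x ∈ r.support, x ∉ S) (hadj : G.Adj S[k] c) : k ≤ r.length := by
  by_contra! hlt
  have hkS : S[k] ∉ S.take (r.length + 1) := by
    intro hmem
    obtain ⟨j, hj, hjk⟩ := List.mem_take_iff_getElem.1 hmem
    have := hS.1.getElem_inj_iff.1 hjk
    omega
  exact hS.getElem_notMem_burnt hk k
    (burnt_monotone hlt (Or.inr ⟨hkS, c, mem_burnt_length_of_walk r hr, hadj⟩))

lemma length_le_of_isPath {L : List V} {v : V} (hS : ValidStrategy G s (L ++ [v]))
    (p : G.Walk s v) (hp : p.IsPath) (hpS : ∀ x ∈ p.support, x ≠ v → x ∉ L ++ [v]) :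
    (L ++ [v]).length ≤ p.length := by
  have hvs : v ≠ s := by
    rintro rfl
    exact hS.notMem_burntSet (by simp) (Set.mem_iUnion.2 ⟨0, rfl⟩)
  obtain ⟨c, hvc, q, hq⟩ := p.reverse.exists_eq_cons_of_ne hvs
  have hvq : v ∉ q.support := ((Walk.cons_isPath_iff _ _).1 (hq ▸ hp.reverse)).2
  have hqS : ∀ x ∈ q.support, x ∉ L ++ [v] := by
    intro x hx
    have hxp : x ∈ p.reverse.support := by
      rw [hq, Walk.support_cons]
      exact List.mem_cons_of_mem _ hx
    rw [Walk.support_reverse, List.mem_reverse] at hxp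
    exact hpS x hxp (ne_of_mem_of_not_mem hx hvq)
  have hlen := hS.le_length_of_adj_getElem (k := L.length) (by simp) q hqS (by simpa using hvc)
  have hpq := congrArg Walk.length hq
  rw [Walk.length_reverse, Walk.length_cons] at hpq
  rw [List.length_append, List.length_singleton]
  omega

end ValidStrategy

lemma burnt_append_singleton_eq {L : List V} {v : V}
    (h : ∀ b ∈ BurntSet G s (L ++ [v]), ¬ G.Adj v b) : burnt G s (L ++ [v]) = burnt G s L := by
  funext i
  induction i with
  | zero => rfl
  | succ i ih =>
    refine congrArg₂ (· ∪ ·) ih (Set.ext fun u => ?_)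
    rw [Set.mem_ofPred_eq, Set.mem_ofPred_eq, ih]
    refine and_congr_left fun ⟨b, hb, hub⟩ => ?_
    have hu : u ≠ v := by
      rintro rfl
      exact h b (Set.mem_iUnion.2 ⟨i, ih ▸ hb⟩) hub
    rw [List.take_append, List.mem_append, not_or, and_iff_left_iff_imp]
    exact fun _ hmem => hu (List.mem_singleton.1 (List.mem_of_mem_take hmem))

lemma MinimalStrategy.exists_adj_burntSet {L : List V} {v : V}
    (hS : MinimalStrategy G s (L ++ [v])) : ∃ b ∈ BurntSet G s (L ++ [v]), G.Adj v b := by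
  by_contra! h
  have heq := burnt_append_singleton_eq h
  have hL : ValidStrategy G s L := by
    refine ⟨hS.1.1.sublist (List.sublist_append_left _ _), fun i hi => ?_⟩
    simpa [heq, List.getElem_append_left hi] using hS.1.2 i (by simp; omega)
  have := hS.2 L (List.sublist_append_left _ _) (by simp) hL
  simp [sav, BurntSet, heq] at this

end Firefighting

theorem minimal_strategy_induced_path_general {V : Type*} (G : SimpleGraph V) (s : V)
    (S : List V) (hS : MinimalStrategy G s S) (hne : S ≠ []) :
    ∃ p : G.Walk s (S.getLast hne), IsInducedPath G p ∧
      S.length + 1 ≤ p.support.length ∧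
      ∀ x ∈ p.support, x ≠ S.getLast hne → x ∈ BurntSet G s S := by
  obtain ⟨L, v, rfl⟩ := (List.eq_nil_or_concat' S).resolve_left hne
  rw [List.getLast_append_singleton]
  obtain ⟨b, hb, hvb⟩ := hS.exists_adj_burntSet
  obtain ⟨r, hr⟩ := exists_walk_of_mem_burntSet hb
  obtain ⟨p, hp, hpr⟩ := (r.concat hvb.symm).exists_isInducedPath_support_subset
  have hpB : ∀ x ∈ p.support, x ≠ v → x ∈ BurntSet G s (L ++ [v]) := by
    intro x hx hxv
    have hx' := hpr hx
    rw [Walk.support_concat, List.mem_append, List.mem_singleton] at hx'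
    exact hr x (hx'.resolve_right hxv)
  have hlen := hS.1.length_le_of_isPath p hp.1
    fun x hx hxv hxS => hS.1.notMem_burntSet hxS (hpB x hx hxv)
  exact ⟨p, hp, by rw [Walk.length_support]; omega, hpB⟩

/-- If `S = (v₁, …, v_t)` is a minimal valid strategy with `t ≥ 1`, then `G`
contains an induced path starting at `s` with at least `t + 1` vertices; moreover such a path
can be chosen ending at `v_t` with every vertex other than `v_t` burned by `S`. -/
theorem minimal_strategy_induced_path {V : Type*} [Fintype V] (G : SimpleGraph V) (s : V)
    (S : List V) (hS : MinimalStrategy G s S) (hne : S ≠ []) :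
    ∃ p : G.Walk s (S.getLast hne), IsInducedPath G p ∧
      S.length + 1 ≤ p.support.length ∧
      ∀ x ∈ p.support, x ≠ S.getLast hne → x ∈ BurntSet G s S :=
  minimal_strategy_induced_path_general G s S hS hne
end

section
/- Let G be a finite simple graph, s a vertex of G, and let v_1, v_2 be two vertices of G with N(v_2) ⊆ N[v_1]. Let S be a valid strategy for the firefighting process on (G, s) that defends v_2 at time step i, and suppose v_1 is not defended by S and is not burned at the start of time step i (that is, v_1 ∉ B_{i−1}). Let S′ be the sequence obtained from S by replacing v_2 with v_1 at time step i. Then S′ is a valid strategy and sav(S) ≤ sav(S′). -/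
open SimpleGraph

variable {V : Type*}

/-!
Write `σ` for the transposition of `v₁` and `v₂`. Since `v₁ ∉ S` and `v₂` occurs in `S` only at
step `i`, the new strategy is `S.map σ`. The condition `N(v₂) ⊆ N[v₁]` makes `σ` preserve
adjacency between vertices other than `v₁`, and `v₁` never burns under the new strategy, so by
induction on time `σ` maps the fire of the new strategy into the fire of `S`. As `σ` is an
involution, a vertex defended by the new strategy and burning when defended would give one
defended by `S` and burning when defended; and as `σ` is injective, the new strategy burns at
most as many vertices as `S`.
-/

open Set Equiv

section Burning

variable {W : Type*} {G : SimpleGraph V} {s : V} {S T : List V}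

lemma burnt_mono (G : SimpleGraph V) (s : V) (S : List V) : Monotone (burnt G s S) :=
  monotone_nat_of_le_succ fun _ => subset_union_left

lemma burnt_eq_of_take_eq {j : ℕ} (h : S.take j = T.take j) :
    burnt G s S j = burnt G s T j := by
  induction j with
  | zero => rfl
  | succ n ih =>
    have hn : S.take n = T.take n := by
      simpa only [List.take_take, Nat.min_eq_left n.le_succ] using congrArg (List.take n) h
    rw [burnt, burnt, ih hn, h]

lemma getElem_notMem_burnt {i : ℕ} (hi : i < S.length) (h : S[i] ∉ burnt G s S i) (j : ℕ) :
    S[i] ∉ burnt G s S j := by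
  obtain hj | hj := le_total j i
  · exact fun hb => h (burnt_mono G s S hj hb)
  induction j, hj using Nat.le_induction with
  | base => exact h
  | succ n hin ih =>
    rintro (hb | ⟨hundef, -⟩)
    · exact ih hb
    · exact hundef (List.mem_take_iff_getElem.2 ⟨i, lt_min (by omega) hi, rfl⟩)

lemma mapsTo_burnt {H : SimpleGraph W} {t : W} {T : List W} {f : W → V} (hst : f t = s)
    (hf_take : ∀ k x, f x ∈ S.take k → x ∈ T.take k)
    (hf_adj : ∀ u ∈ BurntSet H t T, ∀ b ∈ BurntSet H t T, H.Adj u b → G.Adj (f u) (f b))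
    (j : ℕ) : MapsTo f (burnt H t T j) (burnt G s S j) := by
  induction j with
  | zero => rintro _ rfl; exact hst
  | succ n ih =>
    intro u hu
    have hu_burnt : u ∈ BurntSet H t T := mem_iUnion_of_mem _ hu
    rcases hu with hu | ⟨hu_undef, b, hb, hub⟩
    · exact Or.inl (ih hu)
    · exact Or.inr ⟨fun h => hu_undef (hf_take _ _ h), f b, ih hb,
        hf_adj u hu_burnt b (mem_iUnion_of_mem _ hb) hub⟩

lemma ValidStrategy.map {f g : V → V} (hS : ValidStrategy G s S)
    (hfg : Function.LeftInverse f g)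
    (hmaps : ∀ j, MapsTo f (burnt G s (S.map g) j) (burnt G s S j)) :
    ValidStrategy G s (S.map g) := by
  refine ⟨hS.1.map hfg.injective, fun j hj hb => hS.2 j (by simpa using hj) ?_⟩
  simpa [hfg _] using hmaps j hb

lemma sav_le_sav_of_injOn [Finite V] {f : V → V} (hf : InjOn f (BurntSet G s T))
    (hmaps : ∀ j, MapsTo f (burnt G s T j) (burnt G s S j)) : sav G s S ≤ sav G s T := by
  have hcard : (BurntSet G s T).ncard ≤ (BurntSet G s S).ncard :=
    ncard_le_ncard_of_injOn f (mapsTo_iUnion_iUnion hmaps) hf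
  have hS := ncard_add_ncard_compl (BurntSet G s S)
  have hT := ncard_add_ncard_compl (BurntSet G s T)
  unfold sav
  omega

end Burning

lemma SimpleGraph.Adj.swap_of_neighborSet_subset [DecidableEq V] {G : SimpleGraph V}
    {v₁ v₂ u b : V} (hN : G.neighborSet v₂ ⊆ G.neighborSet v₁ ∪ {v₁}) (hu : u ≠ v₁) (hb : b ≠ v₁)
    (hub : G.Adj u b) : G.Adj (swap v₁ v₂ u) (swap v₁ v₂ b) := by
  have hv₁ : ∀ {x}, G.Adj v₂ x → x ≠ v₁ → G.Adj v₁ x := fun hx hx₁ => (hN hx).resolve_right hx₁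
  rcases eq_or_ne u v₂ with rfl | hu₂
  · rw [swap_apply_right, swap_apply_of_ne_of_ne hb hub.ne.symm]
    exact hv₁ hub hb
  rcases eq_or_ne b v₂ with rfl | hb₂
  · rw [swap_apply_right, swap_apply_of_ne_of_ne hu hu₂]
    exact (hv₁ hub.symm hu).symm
  · rwa [swap_apply_of_ne_of_ne hu hu₂, swap_apply_of_ne_of_ne hb hb₂]

lemma List.map_swap_getElem_eq_set [DecidableEq V] {l : List V} {i : ℕ} (hi : i < l.length)
    {a : V} (hl : l.Nodup) (ha : a ∉ l) : l.map (Equiv.swap a l[i]) = l.set i a := by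
  refine List.ext_getElem (by simp) fun j _ hj => ?_
  rw [List.getElem_map, List.getElem_set]
  split_ifs with h
  · subst h
    exact swap_apply_right _ _
  · exact swap_apply_of_ne_of_ne (fun h' => ha (h' ▸ List.getElem_mem _))
      fun h' => h (hl.getElem_inj_iff.1 h').symm

/-- If `N(v₂) ⊆ N[v₁]`, `S` is a valid strategy defending `v₂` at (0-indexed)
time step `i`, and `v₁` is not defended by `S` and not burning at the start of that step, then
the sequence obtained by replacing `v₂` with `v₁` at step `i` is a valid strategy saving at
least as many vertices. -/
theorem replace_defended_vertex {V : Type*} [Fintype V] (G : SimpleGraph V) (s : V)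
    (v₁ v₂ : V) (hN : G.neighborSet v₂ ⊆ G.neighborSet v₁ ∪ {v₁})
    (S : List V) (hS : ValidStrategy G s S) (i : ℕ) (hi : i < S.length)
    (hdef : S.get ⟨i, hi⟩ = v₂) (hv₁S : v₁ ∉ S) (hv₁b : v₁ ∉ burnt G s S i) :
    ValidStrategy G s (S.set i v₁) ∧ sav G s S ≤ sav G s (S.set i v₁) := by
  classical
  obtain rfl : S[i] = v₂ := hdef
  have hT : S.set i v₁ = S.map (swap v₁ S[i]) := (List.map_swap_getElem_eq_set hi hS.1 hv₁S).symm
  have hv₂ : ∀ j, S[i] ∉ burnt G s S j := getElem_notMem_burnt hi (hS.2 i hi)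
  have hv₁ : v₁ ∉ BurntSet G s (S.set i v₁) := by
    have hi' : i < (S.set i v₁).length := by simpa using hi
    have htake : (S.set i v₁).take i = S.take i := by
      rw [List.take_set, List.set_eq_of_length_le (List.length_take_le _ _)]
    simp only [BurntSet, mem_iUnion, not_exists]
    simpa using getElem_notMem_burnt hi' (by simpa [burnt_eq_of_take_eq htake] using hv₁b)
  have hs : swap v₁ S[i] s = s := swap_apply_of_ne_of_ne
    (fun h => hv₁ (mem_iUnion_of_mem 0 h.symm)) (fun h => hv₂ 0 h.symm)
  have hmaps : ∀ j, MapsTo (swap v₁ S[i]) (burnt G s (S.set i v₁) j) (burnt G s S j) :=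
    mapsTo_burnt hs
      (fun k x hx => by
        rw [hT, ← List.map_take, ← swap_apply_self v₁ S[i] x]
        exact List.mem_map_of_mem hx)
      fun u hu b hb => SimpleGraph.Adj.swap_of_neighborSet_subset hN
        (ne_of_mem_of_not_mem hu hv₁) (ne_of_mem_of_not_mem hb hv₁)
  rw [hT] at hmaps ⊢
  exact ⟨hS.map (swap_apply_self _ _) hmaps, sav_le_sav_of_injOn (swap _ _).injective.injOn hmaps⟩
end
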